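/- Fix t ≥ 2 and let 2 ≤ τ ≤ t. On W = (ℂ²)^{⊗t} ⊗ (ℂ²)^{⊗t} the identity G^z_τ · G^x_τ · J_{τ−1} · G^x_τ = G^z_τ · G^x_τ · G^z_{τ−1} holds. -/

import Mathlib

noncomputable section
open Complex Matrix Finset
open scoped Kronecker

abbrev QOp (ι : Type) := Matrix (ι → Fin 2) (ι → Fin 2) ℂ

def pauliX : Matrix (Fin 2) (Fin 2) ℂ := !![0, 1; 1, 0]
def pauliZ : Matrix (Fin 2) (Fin 2) ℂ := !![1, 0; 0, -1]

/-- Single-site operator `M` acting on site `j` (identity elsewhere). -/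
def site {ι : Type} [DecidableEq ι] [Fintype ι] (M : Matrix (Fin 2) (Fin 2) ℂ) (j : ι) :
    QOp ι :=
  Matrix.of fun x y => ∏ k, if k = j then M (x k) (y k) else if x k = y k then (1 : ℂ) else 0

/-- Matrix exponential. -/
abbrev mexp {ι : Type} [DecidableEq ι] [Fintype ι] (A : QOp ι) : QOp ι :=
  NormedSpace.exp A

/-- Operators on the doubled space `W = (ℂ²)^{⊗t} ⊗ (ℂ²)^{⊗t}`. -/
abbrev WOp (t : ℕ) :=
  Matrix ((Fin t → Fin 2) × (Fin t → Fin 2)) ((Fin t → Fin 2) × (Fin t → Fin 2)) ℂ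

/-- `G^a_τ = ½(1⊗1 + σ^a_τ ⊗ σ^a_τ)`; identity for site labels `τ ≤ 0` (1-based labels). -/
def GW (t : ℕ) (M : Matrix (Fin 2) (Fin 2) ℂ) (k : ℤ) : WOp t :=
  if hk : 1 ≤ k ∧ k ≤ (t : ℤ) then
    (1 / 2 : ℂ) • (1 + site M (⟨k.toNat - 1, by omega⟩ : Fin t) ⊗ₖ
      site M (⟨k.toNat - 1, by omega⟩ : Fin t))
  else 1

/-- `J_τ = exp(−i(π/4)σ^z_{τ+1}σ^z_τ) ⊗ exp(i(π/4)σ^z_{τ+1}σ^z_τ)`;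
identity outside `1 ≤ τ ≤ t−1`. -/
def JW (t : ℕ) (k : ℤ) : WOp t :=
  if hk : 1 ≤ k ∧ k + 1 ≤ (t : ℤ) then
    mexp ((-Complex.I) • (((Real.pi / 4 : ℝ) : ℂ) •
        (site pauliZ (⟨k.toNat, by omega⟩ : Fin t) *
          site pauliZ (⟨k.toNat - 1, by omega⟩ : Fin t)))) ⊗ₖ
      mexp (Complex.I • (((Real.pi / 4 : ℝ) : ℂ) •
        (site pauliZ (⟨k.toNat, by omega⟩ : Fin t) *
          site pauliZ (⟨k.toNat - 1, by omega⟩ : Fin t))))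
  else 1

/-- `Z^h_τ = exp(−ihσ^z_τ) ⊗ exp(ihσ^z_τ)`; identity for `τ ≤ 0`. -/
def ZW (t : ℕ) (h : ℝ) (k : ℤ) : WOp t :=
  if hk : 1 ≤ k ∧ k ≤ (t : ℤ) then
    mexp ((-Complex.I) • (((h : ℝ) : ℂ) • site pauliZ (⟨k.toNat - 1, by omega⟩ : Fin t))) ⊗ₖ
      mexp (Complex.I • (((h : ℝ) : ℂ) • site pauliZ (⟨k.toNat - 1, by omega⟩ : Fin t)))
  else 1

/-- `X_τ = exp(i(π/4)σ^x_τ) ⊗ exp(−i(π/4)σ^x_τ)`; identity for `τ ≤ 0`. -/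
def XW (t : ℕ) (k : ℤ) : WOp t :=
  if hk : 1 ≤ k ∧ k ≤ (t : ℤ) then
    mexp (Complex.I • (((Real.pi / 4 : ℝ) : ℂ) •
        site pauliX (⟨k.toNat - 1, by omega⟩ : Fin t))) ⊗ₖ
      mexp ((-Complex.I) • (((Real.pi / 4 : ℝ) : ℂ) •
        site pauliX (⟨k.toNat - 1, by omega⟩ : Fin t)))
  else 1

/-!
Write `P = σ^z_τ`, `Q = σ^z_{τ-1}`, `X = σ^x_τ` on one copy of the chain. Each `G` is the
projector `½(1 + K)` onto the `+1` eigenspace of an involution `K = A ⊗ A`, and since `PQ` is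
diagonal with entries `±1`, `J_{τ-1} = ½ (1 - i PQ) ⊗ (1 + i PQ)`. Because `X` anticommutes with
`PQ`, compressing by `G^x_τ` kills the cross terms `1 ⊗ PQ` and `PQ ⊗ 1`, leaving
`G^x_τ J_{τ-1} G^x_τ = ½(1 + PQ ⊗ PQ) G^x_τ`. Finally `G^z_τ` absorbs the factor `P ⊗ P`, which
turns `½(1 + PQ ⊗ PQ)` into `G^z_{τ-1}`, and `G^z_{τ-1}` commutes with `G^x_τ`.
-/

section PlusProjector

variable {R : Type*} [Ring R] [Algebra ℂ R] {K : R}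

def plusProj (K : R) : R := (1 / 2 : ℂ) • (1 + K)

theorem plusProj_mul_self (hK : K * K = 1) : plusProj K * plusProj K = plusProj K := by
  have h : (1 + K) * (1 + K) = (2 : ℂ) • (1 + K) := by
    calc (1 + K) * (1 + K) = 1 + K + K + K * K := by noncomm_ring
      _ = (2 : ℂ) • (1 + K) := by rw [hK, two_smul]; abel
  simp only [plusProj, smul_mul_smul_comm, h, smul_smul]
  norm_num

theorem plusProj_mul_mul_plusProj_of_anticomm {U : R} (hK : K * K = 1)
    (hU : K * U = -(U * K)) : plusProj K * U * plusProj K = 0 := by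
  have h : (1 + K) * U * (1 + K) = 0 := by
    calc (1 + K) * U * (1 + K) = U + U * K + K * U + K * U * K := by noncomm_ring
      _ = 0 := by rw [hU, neg_mul, mul_assoc, hK, mul_one]; abel
  simp only [plusProj, smul_mul_assoc, mul_smul_comm, h, smul_zero]

theorem Commute.plusProj_right {C : R} (h : Commute C K) : Commute C (plusProj K) :=
  ((Commute.one_right C).add_right h).smul_right _

theorem plusProj_mul_mul_plusProj_of_commute {C : R} (hK : K * K = 1) (hC : Commute C K) :
    plusProj K * C * plusProj K = C * plusProj K := by
  rw [← hC.plusProj_right.eq, mul_assoc, plusProj_mul_self hK]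

theorem plusProj_mul_plusProj_mul {Z : R} (hZ : Z * Z = 1) (S : R) :
    plusProj Z * plusProj (Z * S) = plusProj Z * plusProj S := by
  have h : (1 + Z) * (1 + Z * S) = (1 + Z) * (1 + S) := by
    calc (1 + Z) * (1 + Z * S) = 1 + Z + Z * S + Z * Z * S := by noncomm_ring
      _ = (1 + Z) * (1 + S) := by rw [hZ]; noncomm_ring
  simp only [plusProj, smul_mul_smul_comm, h]

end PlusProjector

section DoubledOperators

variable {n : Type*} [Fintype n] [DecidableEq n]

theorem exp_ofReal_mul_I_smul_diagonal {w : n → ℂ} (hw : ∀ x, w x * w x = 1) (θ : ℝ) :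
    NormedSpace.exp (((θ : ℂ) * I) • diagonal w) =
      (Real.cos θ : ℂ) • 1 + ((Real.sin θ : ℂ) * I) • diagonal w := by
  rw [← diagonal_smul, exp_diagonal, smul_one_eq_diagonal,
    ← diagonal_smul, diagonal_add]
  refine congrArg diagonal (funext fun x => ?_)
  simp only [Pi.coe_exp, Pi.smul_apply, smul_eq_mul, ← Complex.exp_eq_exp_ℂ, ofReal_cos,
    ofReal_sin]
  rcases mul_self_eq_one_iff.mp (hw x) with h | h <;> rw [h]
  · simp only [mul_one, Complex.exp_mul_I]
  · rw [mul_neg_one, ← neg_mul, Complex.exp_mul_I, Complex.cos_neg, Complex.sin_neg]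
    ring

theorem exp_kronecker_exp_pi_div_four {w : n → ℂ} (hw : ∀ x, w x * w x = 1) :
    NormedSpace.exp ((-I) • (((Real.pi / 4 : ℝ) : ℂ) • diagonal w)) ⊗ₖ
        NormedSpace.exp (I • (((Real.pi / 4 : ℝ) : ℂ) • diagonal w)) =
      (1 / 2 : ℂ) • ((1 + (-I) • diagonal w) ⊗ₖ (1 + I • diagonal w)) := by
  have hc : ((√2 / 2 : ℝ) : ℂ) * ((√2 / 2 : ℝ) : ℂ) = 1 / 2 := by
    rw [← ofReal_mul, div_mul_div_comm, Real.mul_self_sqrt zero_le_two]; norm_num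
  have hexp : ∀ ε : ℝ, ε = 1 ∨ ε = -1 →
      NormedSpace.exp (((ε : ℂ) * I) • (((Real.pi / 4 : ℝ) : ℂ) • diagonal w)) =
        ((√2 / 2 : ℝ) : ℂ) • (1 + ((ε : ℂ) * I) • diagonal w) := by
    intro ε hε
    rw [smul_smul, mul_right_comm, ← ofReal_mul, exp_ofReal_mul_I_smul_diagonal hw]
    rcases hε with rfl | rfl
    · simp only [one_mul, Real.cos_pi_div_four, Real.sin_pi_div_four, ofReal_one]
      module
    · simp only [neg_one_mul, Real.cos_neg, Real.sin_neg, Real.cos_pi_div_four,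
        Real.sin_pi_div_four, ofReal_neg, ofReal_one]
      module
  have hm := hexp (-1) (Or.inr rfl)
  have hp := hexp 1 (Or.inl rfl)
  simp only [ofReal_neg, ofReal_one, neg_one_mul, one_mul] at hm hp
  rw [hm, hp, smul_kronecker, kronecker_smul, smul_smul, hc]

theorem kronecker_neg {l m p q α : Type*} [Ring α] (A : Matrix l m α) (B : Matrix p q α) :
    A ⊗ₖ (-B) = -(A ⊗ₖ B) := by
  ext; simp

theorem neg_kronecker {l m p q α : Type*} [Ring α] (A : Matrix l m α) (B : Matrix p q α) :
    (-A) ⊗ₖ B = -(A ⊗ₖ B) := by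
  ext; simp

theorem kronecker_self_mul_self {X : Matrix n n ℂ} (hX : X * X = 1) : X ⊗ₖ X * X ⊗ₖ X = 1 := by
  rw [← mul_kronecker_mul, hX, one_kronecker_one]

theorem plusProj_mul_kronecker_mul_plusProj {X A : Matrix n n ℂ} (hX : X * X = 1)
    (hXA : X * A = -(A * X)) :
    plusProj (X ⊗ₖ X) * ((1 / 2 : ℂ) • ((1 + (-I) • A) ⊗ₖ (1 + I • A))) * plusProj (X ⊗ₖ X) =
      plusProj (A ⊗ₖ A) * plusProj (X ⊗ₖ X) := by
  have hK := kronecker_self_mul_self hX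
  have hU : X ⊗ₖ X * (1 ⊗ₖ A) = -(1 ⊗ₖ A * X ⊗ₖ X) := by
    simp only [← mul_kronecker_mul, one_mul, mul_one, hXA, kronecker_neg]
  have hV : X ⊗ₖ X * (A ⊗ₖ 1) = -(A ⊗ₖ 1 * X ⊗ₖ X) := by
    simp only [← mul_kronecker_mul, one_mul, mul_one, hXA, neg_kronecker]
  have hC : Commute (A ⊗ₖ A) (X ⊗ₖ X) := by
    rw [Commute, SemiconjBy, ← mul_kronecker_mul, ← mul_kronecker_mul, hXA, neg_kronecker,
      kronecker_neg, neg_neg]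
  have hexpand : (1 + (-I) • A) ⊗ₖ (1 + I • A) = 1 + I • (1 ⊗ₖ A) + (-I) • (A ⊗ₖ 1) + A ⊗ₖ A := by
    have hI : I * -I = 1 := by rw [mul_neg, I_mul_I, neg_neg]
    simp only [add_kronecker, kronecker_add, smul_kronecker, kronecker_smul, one_kronecker_one,
      smul_add, smul_smul, hI, one_smul]
    abel
  simp only [hexpand, mul_smul_comm, smul_mul_assoc, mul_add, add_mul, mul_one,
    plusProj_mul_self hK, plusProj_mul_mul_plusProj_of_anticomm hK hU,
    plusProj_mul_mul_plusProj_of_anticomm hK hV, plusProj_mul_mul_plusProj_of_commute hK hC,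
    smul_zero, add_zero]
  simp only [plusProj, smul_mul_assoc, add_mul, one_mul]

theorem plusProj_mul_plusProj_mul_exp_kronecker_exp_mul_plusProj {P Q X : Matrix n n ℂ}
    {w : n → ℂ} (hPQ : P * Q = diagonal w) (hw : ∀ x, w x * w x = 1) (hP : P * P = 1)
    (hX : X * X = 1) (hXP : X * P = -(P * X)) (hXQ : Commute X Q) :
    plusProj (P ⊗ₖ P) * plusProj (X ⊗ₖ X) *
        (NormedSpace.exp ((-I) • (((Real.pi / 4 : ℝ) : ℂ) • (P * Q))) ⊗ₖ
          NormedSpace.exp (I • (((Real.pi / 4 : ℝ) : ℂ) • (P * Q)))) * plusProj (X ⊗ₖ X) =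
      plusProj (P ⊗ₖ P) * plusProj (X ⊗ₖ X) * plusProj (Q ⊗ₖ Q) := by
  have hXA : X * (P * Q) = -(P * Q * X) := by
    rw [← mul_assoc, hXP, neg_mul, mul_assoc, hXQ.eq, ← mul_assoc]
  have hXQ₂ : Commute (plusProj (X ⊗ₖ X)) (plusProj (Q ⊗ₖ Q)) := by
    refine Commute.plusProj_right (Commute.symm (Commute.plusProj_right ?_))
    rw [Commute, SemiconjBy, ← mul_kronecker_mul, ← mul_kronecker_mul, hXQ.eq]
  have hJ := exp_kronecker_exp_pi_div_four hw
  rw [← hPQ] at hJ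
  calc _ = plusProj (P ⊗ₖ P) * (plusProj (X ⊗ₖ X) *
          ((1 / 2 : ℂ) • ((1 + (-I) • (P * Q)) ⊗ₖ (1 + I • (P * Q)))) * plusProj (X ⊗ₖ X)) := by
        rw [hJ, mul_assoc (plusProj (P ⊗ₖ P)), mul_assoc (plusProj (P ⊗ₖ P))]
    _ = plusProj (P ⊗ₖ P) * plusProj ((P ⊗ₖ P) * (Q ⊗ₖ Q)) * plusProj (X ⊗ₖ X) := by
        rw [plusProj_mul_kronecker_mul_plusProj hX hXA, mul_kronecker_mul, mul_assoc]
    _ = _ := by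
        rw [plusProj_mul_plusProj_mul (kronecker_self_mul_self hP), mul_assoc, ← hXQ₂.eq,
          ← mul_assoc]

end DoubledOperators

section ProductOperators

variable {ι : Type} [Fintype ι]

/-- The tensor product `⨂ₖ f k` acting on `(ℂ²)^{⊗ι}`. -/
def productOp (f : ι → Matrix (Fin 2) (Fin 2) ℂ) : QOp ι :=
  Matrix.of fun x y => ∏ k, f k (x k) (y k)

theorem productOp_diagonal (d : ι → Fin 2 → ℂ) :
    productOp (fun k => diagonal (d k)) = diagonal fun x => ∏ k, d k (x k) := by
  ext x y
  by_cases hxy : x = y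
  · subst hxy; simp [productOp]
  · obtain ⟨k, hk⟩ := Function.ne_iff.mp hxy
    rw [diagonal_apply_ne _ hxy]
    exact Finset.prod_eq_zero (Finset.mem_univ k) (diagonal_apply_ne _ hk)

variable [DecidableEq ι]

theorem productOp_mul_productOp (f g : ι → Matrix (Fin 2) (Fin 2) ℂ) :
    productOp f * productOp g = productOp (f * g) := by
  ext x y
  simp only [productOp, Matrix.mul_apply, Matrix.of_apply, Pi.mul_apply,
    ← Finset.prod_mul_distrib]
  exact (Fintype.prod_sum fun k a => f k (x k) a * g k a (y k)).symm

theorem site_eq_productOp (M : Matrix (Fin 2) (Fin 2) ℂ) (j : ι) :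
    site M j = productOp (Pi.mulSingle j M) := by
  ext x y
  refine Finset.prod_congr rfl fun k _ => ?_
  by_cases hk : k = j
  · subst hk; simp
  · simp [hk, Matrix.one_apply]

theorem site_mul_site (M N : Matrix (Fin 2) (Fin 2) ℂ) (j : ι) :
    site M j * site N j = site (M * N) j := by
  simp only [site_eq_productOp, productOp_mul_productOp, Pi.mulSingle_mul]

theorem site_commute (M N : Matrix (Fin 2) (Fin 2) ℂ) {j l : ι} (hjl : j ≠ l) :
    Commute (site M j) (site N l) := by
  simp only [Commute, SemiconjBy, site_eq_productOp, productOp_mul_productOp,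
    (Pi.mulSingle_commute (f := fun _ : ι => Matrix (Fin 2) (Fin 2) ℂ) hjl M N).eq]

theorem site_diagonal (d : Fin 2 → ℂ) (j : ι) :
    site (diagonal d) j = diagonal fun x => d (x j) := by
  have : Pi.mulSingle j (diagonal d) =
      fun k => diagonal (Pi.mulSingle (M := fun _ => Fin 2 → ℂ) j d k) :=
    funext fun k => (Pi.apply_mulSingle (fun _ => diagonal) (fun _ => diagonal_one) j d k).symm
  simp [site_eq_productOp, this, productOp_diagonal, Pi.mulSingle_apply, ite_apply]

theorem site_one (j : ι) : site 1 j = 1 := by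
  simpa using site_diagonal (1 : Fin 2 → ℂ) j

theorem site_smul (c : ℂ) (M : Matrix (Fin 2) (Fin 2) ℂ) (j : ι) :
    site (c • M) j = c • site M j := by
  rw [← smul_one_mul, ← site_mul_site, smul_one_eq_diagonal, site_diagonal,
    ← smul_one_eq_diagonal, smul_one_mul]

end ProductOperators

section Pauli

theorem pauliX_mul_self : pauliX * pauliX = 1 := by
  ext i j; fin_cases i <;> fin_cases j <;> simp [pauliX]

theorem pauliZ_mul_self : pauliZ * pauliZ = 1 := by
  ext i j; fin_cases i <;> fin_cases j <;> simp [pauliZ]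

theorem pauliX_mul_pauliZ : pauliX * pauliZ = -(pauliZ * pauliX) := by
  ext i j; fin_cases i <;> fin_cases j <;> simp [pauliX, pauliZ]

theorem pauliZ_eq_diagonal : pauliZ = diagonal ![1, -1] := by
  ext i j; fin_cases i <;> fin_cases j <;> simp [pauliZ]

theorem pauliZ_diag_mul_self (a : Fin 2) : ![(1 : ℂ), -1] a * ![(1 : ℂ), -1] a = 1 := by
  fin_cases a <;> simp

variable {ι : Type} [DecidableEq ι] [Fintype ι]

theorem site_pauliZ_mul_site_pauliZ (i l : ι) :
    site pauliZ i * site pauliZ l = diagonal fun x => ![1, -1] (x i) * ![(1 : ℂ), -1] (x l) := by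
  rw [pauliZ_eq_diagonal, site_diagonal, site_diagonal, diagonal_mul_diagonal]

theorem site_mul_self_eq_one {M : Matrix (Fin 2) (Fin 2) ℂ} (hM : M * M = 1) (j : ι) :
    site M j * site M j = 1 := by
  rw [site_mul_site, hM, site_one]

theorem site_pauliX_mul_site_pauliZ (j : ι) :
    site pauliX j * site pauliZ j = -(site pauliZ j * site pauliX j) := by
  rw [site_mul_site, site_mul_site, pauliX_mul_pauliZ, ← neg_one_smul ℂ, site_smul, neg_one_smul]

end Pauli

theorem GW_natCast_succ (t : ℕ) (M : Matrix (Fin 2) (Fin 2) ℂ) {j : ℕ} (hj : j < t) :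
    GW t M ((j + 1 : ℕ) : ℤ) = plusProj (site M ⟨j, hj⟩ ⊗ₖ site M ⟨j, hj⟩) := by
  rw [GW, dif_pos (by omega)]
  simp only [Int.toNat_natCast, Nat.add_sub_cancel]
  rfl

theorem JW_natCast_succ (t : ℕ) {j : ℕ} (hj : j + 1 < t) :
    JW t ((j + 1 : ℕ) : ℤ) =
      mexp ((-I) • (((Real.pi / 4 : ℝ) : ℂ) •
          (site pauliZ (⟨j + 1, hj⟩ : Fin t) * site pauliZ (⟨j, by omega⟩ : Fin t)))) ⊗ₖ
        mexp (I • (((Real.pi / 4 : ℝ) : ℂ) •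
          (site pauliZ (⟨j + 1, hj⟩ : Fin t) * site pauliZ (⟨j, by omega⟩ : Fin t)))) := by
  rw [JW, dif_pos (by omega)]
  simp only [Int.toNat_natCast, Nat.add_sub_cancel]

theorem Gz_Gx_J_Gx_general (t : ℕ) (τ : ℕ) (hτ1 : 2 ≤ τ) (hτ2 : τ ≤ t) :
    GW t pauliZ (τ : ℤ) * GW t pauliX (τ : ℤ) * JW t ((τ : ℤ) - 1) * GW t pauliX (τ : ℤ) =
      GW t pauliZ (τ : ℤ) * GW t pauliX (τ : ℤ) * GW t pauliZ ((τ : ℤ) - 1) := by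
  obtain ⟨s, rfl⟩ : ∃ s, τ = s + 1 + 1 := ⟨τ - 2, by omega⟩
  have hs : s + 1 < t := by omega
  rw [show ((s + 1 + 1 : ℕ) : ℤ) - 1 = ((s + 1 : ℕ) : ℤ) by push_cast; ring,
    GW_natCast_succ t _ hs, GW_natCast_succ t _ hs, GW_natCast_succ t _ (by omega : s < t),
    JW_natCast_succ t hs]
  exact plusProj_mul_plusProj_mul_exp_kronecker_exp_mul_plusProj
    (site_pauliZ_mul_site_pauliZ _ _)
    (fun x => by rw [mul_mul_mul_comm, pauliZ_diag_mul_self, pauliZ_diag_mul_self, one_mul])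
    (site_mul_self_eq_one pauliZ_mul_self _) (site_mul_self_eq_one pauliX_mul_self _)
    (site_pauliX_mul_site_pauliZ _) (site_commute _ _ (by simp))

/-- **Projector identity on the doubled chain:** for `2 ≤ τ ≤ t`,
`G^z_τ·G^x_τ·J_{τ−1}·G^x_τ = G^z_τ·G^x_τ·G^z_{τ−1}`. -/
theorem Gz_Gx_J_Gx (t : ℕ) (ht : 2 ≤ t) (τ : ℕ) (hτ1 : 2 ≤ τ) (hτ2 : τ ≤ t) :
    GW t pauliZ (τ : ℤ) * GW t pauliX (τ : ℤ) * JW t ((τ : ℤ) - 1) * GW t pauliX (τ : ℤ) =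
      GW t pauliZ (τ : ℤ) * GW t pauliX (τ : ℤ) * GW t pauliZ ((τ : ℤ) - 1) :=
  Gz_Gx_J_Gx_general t τ hτ1 hτ2
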